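/- arXiv:2010.08238 — 5 statements merged into one kernel-verified Lean document; each statement's English description precedes it below -/
import Mathlib

section
/- PIE bound for the randomized response: let Q_RR be the ε-RR on alphabet 𝒳 of size k, and let θ = (e^ε−1)/(k+e^ε−1). For any joint distribution of (U,X) with U over a finite user set and X over 𝒳, if Y is produced by applying Q_RR to X, then I(U;Y) ≤ θ · I(U;X). -/
open Finset Real

/-- A probability mass function on a finite type. -/
def IsPmf {A : Type*} [Fintype A] (p : A → ℝ) : Prop :=
  (∀ a, 0 ≤ p a) ∧ ∑ a, p a = 1

/-- Mutual information (in bits) of a joint pmf on `A × B`. -/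
noncomputable def mi2 {A B : Type*} [Fintype A] [Fintype B] (p : A × B → ℝ) : ℝ :=
  ∑ a : A, ∑ b : B, p (a, b) *
    Real.logb 2 (p (a, b) / ((∑ b' : B, p (a, b')) * (∑ a' : A, p (a', b))))

/-! The ε-randomized response keeps `X` with probability `θ` and otherwise outputs an
independent uniform symbol, so the joint pmf of `(U, Y)` is `θ p(u, y) + (1 - θ) p_U(u) / k`.
The marginal of `U` is unchanged, so each summand of `I(U; Y)` is `x log (x / y)` evaluated at
the `θ`-convex combination of the pair `(p(u, y), p_U(u) p_Y(y))` from `I(U; X)` with a pair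
`(c, c)`, where it vanishes. Joint convexity of `(x, y) ↦ x log (x / y)` (the two-term log-sum
inequality, which follows from `log z ≤ z - 1`) bounds it by `θ` times the summand of `I(U; X)`. -/

namespace Real

lemma mul_log_add_sub_le_mul_log_div {x y : ℝ} (r : ℝ) (hx : 0 ≤ x) (hy : 0 ≤ y) (hr : 0 < r)
    (hxy : 0 < x → 0 < y) : x * log r + x - r * y ≤ x * log (x / y) := by
  rcases hx.eq_or_lt with rfl | hx
  · simp only [zero_mul, zero_add, zero_sub, neg_nonpos]
    positivity
  have hy_pos := hxy hx
  have h := log_le_sub_one_of_pos (show 0 < r * y / x by positivity)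
  rw [log_div (by positivity) hx.ne', log_mul hr.ne' hy_pos.ne'] at h
  rw [log_div hx.ne' hy_pos.ne']
  have hmul := mul_le_mul_of_nonneg_left h hx.le
  have hcancel : x * (r * y / x) = r * y := by field_simp
  rw [mul_sub x (r * y / x) 1, hcancel] at hmul
  linarith

lemma add_mul_log_div_add_le {a₁ a₂ b₁ b₂ : ℝ} (ha₁ : 0 ≤ a₁) (ha₂ : 0 ≤ a₂) (hb₁ : 0 ≤ b₁)
    (hb₂ : 0 ≤ b₂) (h₁ : 0 < a₁ → 0 < b₁) (h₂ : 0 < a₂ → 0 < b₂) :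
    (a₁ + a₂) * log ((a₁ + a₂) / (b₁ + b₂)) ≤ a₁ * log (a₁ / b₁) + a₂ * log (a₂ / b₂) := by
  rcases (add_nonneg ha₁ ha₂).eq_or_lt with hA | hA
  · obtain ⟨rfl, rfl⟩ := (add_eq_zero_iff_of_nonneg ha₁ ha₂).mp hA.symm
    simp
  have hB : 0 < b₁ + b₂ := by
    rcases ha₁.eq_or_lt with rfl | ha₁
    · linarith [h₂ (by linarith)]
    · linarith [h₁ ha₁]
  set r := (a₁ + a₂) / (b₁ + b₂)
  have hrB : r * (b₁ + b₂) = a₁ + a₂ := div_mul_cancel₀ _ hB.ne'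
  have hbound₁ := mul_log_add_sub_le_mul_log_div r ha₁ hb₁ (by positivity) h₁
  have hbound₂ := mul_log_add_sub_le_mul_log_div r ha₂ hb₂ (by positivity) h₂
  linarith

lemma mul_logb_div_convex_comb_le {b t x y z : ℝ} (hb : 1 < b) (ht₀ : 0 ≤ t) (ht₁ : t ≤ 1)
    (hx : 0 ≤ x) (hy : 0 ≤ y) (hz : 0 ≤ z) (hxy : 0 < x → 0 < y) :
    (t * x + (1 - t) * z) * logb b ((t * x + (1 - t) * z) / (t * y + (1 - t) * z)) ≤
      t * (x * logb b (x / y)) := by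
  rcases ht₀.eq_or_lt with rfl | ht
  · simp [logb, log_div_self]
  have hlogsum := add_mul_log_div_add_le (mul_nonneg ht₀ hx) (mul_nonneg (sub_nonneg.2 ht₁) hz)
    (mul_nonneg ht₀ hy) (mul_nonneg (sub_nonneg.2 ht₁) hz)
    (fun h => mul_pos ht (hxy (pos_of_mul_pos_right h ht.le))) id
  rw [mul_div_mul_left _ _ ht.ne', log_div_self] at hlogsum
  simp only [logb, ← mul_div_assoc]
  exact div_le_div_of_nonneg_right (by linarith) (log_pos hb).le

end Real

theorem mi2_convex_comb_indep_le {A B : Type*} [Fintype A] [Fintype B] {p : A × B → ℝ}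
    {r : B → ℝ} {t : ℝ} (hp : IsPmf p) (hr : IsPmf r) (ht₀ : 0 ≤ t) (ht₁ : t ≤ 1) :
    mi2 (fun ab : A × B => t * p ab + (1 - t) * ((∑ b', p (ab.1, b')) * r ab.2)) ≤
      t * mi2 p := by
  obtain ⟨hp₀, hp₁⟩ := hp
  obtain ⟨hr₀, hr₁⟩ := hr
  have hrow : ∀ a, ∑ b', (t * p (a, b') + (1 - t) * ((∑ b'', p (a, b'')) * r b')) =
      ∑ b', p (a, b') := by
    intro a
    rw [sum_add_distrib, ← mul_sum, ← mul_sum, ← mul_sum, hr₁]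
    ring
  have hcol : ∀ b, ∑ a', (t * p (a', b) + (1 - t) * ((∑ b'', p (a', b'')) * r b)) =
      t * ∑ a', p (a', b) + (1 - t) * r b := by
    intro b
    rw [sum_add_distrib, ← mul_sum, ← mul_sum, ← sum_mul, ← Fintype.sum_prod_type, hp₁]
    ring
  rw [mi2, mi2, mul_sum]
  refine sum_le_sum fun a _ => ?_
  rw [mul_sum]
  refine sum_le_sum fun b _ => ?_
  simp only [hrow, hcol]
  set S := ∑ b', p (a, b')
  set T := ∑ a', p (a', b)
  have hpS : p (a, b) ≤ S := single_le_sum (fun b' _ => hp₀ (a, b')) (mem_univ b)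
  have hpT : p (a, b) ≤ T := single_le_sum (fun a' _ => hp₀ (a', b)) (mem_univ a)
  have hS : 0 ≤ S := (hp₀ _).trans hpS
  rw [show S * (t * T + (1 - t) * r b) = t * (S * T) + (1 - t) * (S * r b) by ring]
  exact mul_logb_div_convex_comb_le one_lt_two ht₀ ht₁ (hp₀ _)
    (mul_nonneg hS ((hp₀ _).trans hpT)) (mul_nonneg hS (hr₀ b))
    (fun h => mul_pos (h.trans_le hpS) (h.trans_le hpT))

lemma sum_mul_ite_eq {R X : Type*} [CommRing R] [Fintype X] [DecidableEq X] (f : X → R) (y : X)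
    (α β : R) :
    ∑ x, f x * (if y = x then α else β) = (α - β) * f y + β * ∑ x, f x := by
  have hsplit : ∀ x, f x * (if y = x then α else β) =
      (if y = x then (α - β) * f x else 0) + β * f x := by
    intro x; split_ifs <;> ring
  simp only [hsplit, sum_add_distrib, sum_ite_eq, mem_univ, if_true, ← mul_sum]

theorem stmt7 {U 𝒳 : Type*} [Fintype U] [Fintype 𝒳] [DecidableEq 𝒳]
    (hk : 2 ≤ Fintype.card 𝒳) (ε : ℝ) (hε : 0 ≤ ε)
    (p : U × 𝒳 → ℝ) (hp : IsPmf p) :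
    mi2 (fun uy : U × 𝒳 => ∑ x : 𝒳, p (uy.1, x) *
        (if uy.2 = x then Real.exp ε / ((Fintype.card 𝒳 : ℝ) + Real.exp ε - 1)
          else 1 / ((Fintype.card 𝒳 : ℝ) + Real.exp ε - 1))) ≤
      (Real.exp ε - 1) / ((Fintype.card 𝒳 : ℝ) + Real.exp ε - 1) * mi2 p := by
  set k : ℝ := (Fintype.card 𝒳 : ℝ)
  set θ := (Real.exp ε - 1) / (k + Real.exp ε - 1) with hθ
  have hk₂ : (2 : ℝ) ≤ k := by simp only [k]; exact_mod_cast hk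
  have hexp : 1 ≤ Real.exp ε := Real.one_le_exp hε
  have hD : 0 < k + Real.exp ε - 1 := by linarith
  have hθ₀ : 0 ≤ θ := div_nonneg (by linarith) hD.le
  have hθ₁ : θ ≤ 1 := (div_le_one hD).2 (by linarith)
  have huniform : IsPmf (fun _ : 𝒳 => 1 / k) := by
    refine ⟨fun _ => by positivity, ?_⟩
    rw [sum_const, card_univ, nsmul_eq_mul]
    exact mul_one_div_cancel (by linarith : (0 : ℝ) < k).ne'
  convert mi2_convex_comb_indep_le hp huniform hθ₀ hθ₁ using 3 with ⟨u, y⟩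
  rw [sum_mul_ite_eq, hθ]
  field_simp
  ring
end

section
/- PIE bound for the GLH: let θ = (e^ε−1)/(g+e^ε−1). For any joint distribution of (U,X), if Y = (H, Ŷ) is produced by the (g,ε)-GLH applied to X (H uniform on ℋ independent of (U,X), and given H=h and X=x, Ŷ = h(x) with probability e^ε/(g+e^ε−1) and each other value in [g] with probability 1/(g+e^ε−1)), then I(U;Y) ≤ θ · I(U;X). -/
open Finset Real

lemma log_sum_gen {ι : Type*} (s : Finset ι) (a b : ι → ℝ)
    (ha : ∀ i ∈ s, 0 ≤ a i) (hb : ∀ i ∈ s, 0 ≤ b i)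
    (h0 : ∀ i ∈ s, b i = 0 → a i = 0) :
    (∑ i ∈ s, a i) * Real.log ((∑ i ∈ s, a i) / (∑ i ∈ s, b i)) ≤
      ∑ i ∈ s, a i * Real.log (a i / b i) := by
  set A := ∑ i ∈ s, a i with hA
  set B := ∑ i ∈ s, b i with hB
  rcases (Finset.sum_nonneg ha).eq_or_lt with hA0 | hA0
  · have hz : ∀ i ∈ s, a i = 0 := (Finset.sum_eq_zero_iff_of_nonneg ha).mp hA0.symm
    rw [show A = 0 from hA0.symm, zero_mul]
    exact Finset.sum_nonneg fun i hi => by rw [hz i hi]; simp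
  · have hBpos : 0 < B := by
      rcases (Finset.sum_nonneg hb).eq_or_lt with h | h
      · exfalso
        have hb0 := (Finset.sum_eq_zero_iff_of_nonneg hb).mp h.symm
        have : A = 0 := Finset.sum_eq_zero fun i hi => h0 i hi (hb0 i hi)
        exact hA0.ne' this
      · exact h
    have key : ∀ i ∈ s, a i * Real.log (A / B) + (a i - A / B * b i) ≤
        a i * Real.log (a i / b i) := by
      intro i hi
      rcases (ha i hi).eq_or_lt with hai | hai
      · rw [← hai]
        have h4 : 0 ≤ A / B * b i := mul_nonneg (div_nonneg hA0.le hBpos.le) (hb i hi)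
        simp only [zero_mul, zero_add, zero_sub]
        linarith
      · have hbi : 0 < b i := by
          rcases (hb i hi).eq_or_lt with h | h
          · exact absurd (h0 i hi h.symm) hai.ne'
          · exact h
        have hABpos : 0 < A / B := div_pos hA0 hBpos
        have h1 : Real.log (A / B * (b i / a i)) ≤ A / B * (b i / a i) - 1 :=
          Real.log_le_sub_one_of_pos (by positivity)
        have e1 : Real.log (A / B * (b i / a i)) =
            Real.log (A / B) - Real.log (a i / b i) := by
          rw [Real.log_mul hABpos.ne' (by positivity), Real.log_div hbi.ne' hai.ne',
            Real.log_div hai.ne' hbi.ne']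
          ring
        rw [e1] at h1
        have h2 := mul_le_mul_of_nonneg_left h1 hai.le
        have e3 : a i * (A / B * (b i / a i)) = A / B * b i := by
          rw [mul_comm, mul_assoc, div_mul_cancel₀ _ hai.ne']
        rw [mul_sub, mul_sub, mul_one, e3] at h2
        linarith
    calc A * Real.log (A / B)
        = ∑ i ∈ s, (a i * Real.log (A / B) + (a i - A / B * b i)) := by
          rw [Finset.sum_add_distrib, Finset.sum_sub_distrib, ← Finset.sum_mul,
            ← Finset.mul_sum, ← hA, ← hB, div_mul_cancel₀ _ hBpos.ne']
          ring
      _ ≤ _ := Finset.sum_le_sum key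

lemma logb_sum_gen {ι : Type*} (s : Finset ι) (a b : ι → ℝ)
    (ha : ∀ i ∈ s, 0 ≤ a i) (hb : ∀ i ∈ s, 0 ≤ b i)
    (h0 : ∀ i ∈ s, b i = 0 → a i = 0) :
    (∑ i ∈ s, a i) * Real.logb 2 ((∑ i ∈ s, a i) / (∑ i ∈ s, b i)) ≤
      ∑ i ∈ s, a i * Real.logb 2 (a i / b i) := by
  have h2 : (0:ℝ) < Real.log 2 := Real.log_pos one_lt_two
  have h := log_sum_gen s a b ha hb h0
  simp only [Real.logb, ← mul_div_assoc]
  rw [← Finset.sum_div]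
  exact div_le_div_of_nonneg_right h h2.le |>.trans_eq rfl

lemma logb_two_term (a₁ a₂ b₁ b₂ : ℝ) (ha₁ : 0 ≤ a₁) (ha₂ : 0 ≤ a₂)
    (hb₁ : 0 ≤ b₁) (hb₂ : 0 ≤ b₂) (h₁ : b₁ = 0 → a₁ = 0) (h₂ : b₂ = 0 → a₂ = 0) :
    (a₁ + a₂) * Real.logb 2 ((a₁ + a₂) / (b₁ + b₂)) ≤
      a₁ * Real.logb 2 (a₁ / b₁) + a₂ * Real.logb 2 (a₂ / b₂) := by
  have := logb_sum_gen (Finset.univ : Finset Bool)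
    (fun t => if t then a₁ else a₂) (fun t => if t then b₁ else b₂)
    (by intro i _; cases i <;> simpa) (by intro i _; cases i <;> simpa)
    (by intro i _; cases i <;> simpa)
  simpa [Fintype.sum_bool] using this

lemma self_logb (x : ℝ) : x * Real.logb 2 (x / x) = 0 := by
  rcases eq_or_ne x 0 with h | h
  · simp [h]
  · simp [div_self h]

lemma scaled_logb (θ r s : ℝ) :
    (θ * r) * Real.logb 2 ((θ * r) / (θ * s)) = θ * (r * Real.logb 2 (r / s)) := by
  rcases eq_or_ne θ 0 with h | h
  · simp [h]
  · rw [mul_div_mul_left _ _ h]; ring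

lemma mi2_push {U B C : Type*} [Fintype U] [Fintype B] [Fintype C] [DecidableEq C]
    (m : U × B → ℝ) (hm : ∀ x, 0 ≤ m x) (φ : B → C) :
    mi2 (fun uc : U × C => ∑ b : B, if φ b = uc.2 then m (uc.1, b) else 0) ≤ mi2 m := by
  set mU : U → ℝ := fun u => ∑ b : B, m (u, b) with hmU
  set mB : B → ℝ := fun b => ∑ u : U, m (u, b) with hmB
  set T : U → C → ℝ := fun u c => ∑ b : B, if φ b = c then m (u, b) else 0 with hT
  have hmUnn : ∀ u, 0 ≤ mU u := fun u => Finset.sum_nonneg fun b _ => hm _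
  have hmBnn : ∀ b, 0 ≤ mB b := fun b => Finset.sum_nonneg fun u _ => hm _
  have hmle1 : ∀ u b, m (u, b) ≤ mU u := fun u b =>
    Finset.single_le_sum (fun b _ => hm (u, b)) (Finset.mem_univ b)
  have hmle2 : ∀ u b, m (u, b) ≤ mB b := fun u b =>
    Finset.single_le_sum (fun u _ => hm (u, b)) (Finset.mem_univ u)
  have f1 : ∀ u, (∑ c : C, T u c) = mU u := by
    intro u
    rw [hT]
    simp only
    rw [Finset.sum_comm]
    simp [hmU]
  have f2 : ∀ c, (∑ u : U, T u c) = ∑ b : B, if φ b = c then mB b else 0 := by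
    intro c
    rw [hT]
    simp only
    rw [Finset.sum_comm]
    refine Finset.sum_congr rfl fun b _ => ?_
    split <;> simp [hmB]
  have step : ∀ u, ∑ c : C, T u c *
      Real.logb 2 (T u c / ((∑ c' : C, T u c') * (∑ u' : U, T u' c))) ≤
      ∑ b : B, m (u, b) * Real.logb 2 (m (u, b) / (mU u * mB b)) := by
    intro u
    have inner : ∀ c, T u c *
        Real.logb 2 (T u c / ((∑ c' : C, T u c') * (∑ u' : U, T u' c))) ≤
        ∑ b : B, if φ b = c then
          m (u, b) * Real.logb 2 (m (u, b) / (mU u * mB b)) else 0 := by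
      intro c
      have hbsum : (∑ b : B, if φ b = c then mU u * mB b else 0) =
          (∑ c' : C, T u c') * (∑ u' : U, T u' c) := by
        rw [f1, f2, Finset.mul_sum]
        exact Finset.sum_congr rfl fun b _ => by split <;> simp
      have := logb_sum_gen (Finset.univ : Finset B)
        (fun b => if φ b = c then m (u, b) else 0)
        (fun b => if φ b = c then mU u * mB b else 0)
        (fun b _ => by split; exacts [hm _, le_rfl])
        (fun b _ => by split
                       exacts [mul_nonneg (hmUnn u) (hmBnn b), le_rfl])
        (fun b _ hb => by
          by_cases hc : φ b = c
          · simp only [if_pos hc] at hb ⊢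
            rcases mul_eq_zero.mp hb with h | h
            · have := hmle1 u b; have := hm (u, b); linarith [hmUnn u, h ▸ hmle1 u b]
            · linarith [hm (u, b), h ▸ hmle2 u b]
          · simp [hc])
      rw [hbsum] at this
      refine le_trans this (le_of_eq (Finset.sum_congr rfl fun b _ => ?_))
      by_cases hc : φ b = c
      · simp [hc]
      · simp [hc]
    calc _ ≤ ∑ c : C, ∑ b : B, (if φ b = c then
          m (u, b) * Real.logb 2 (m (u, b) / (mU u * mB b)) else 0) :=
        Finset.sum_le_sum fun c _ => inner c
      _ = _ := by
        rw [Finset.sum_comm]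
        exact Finset.sum_congr rfl fun b _ => by simp
  have goal1 : mi2 (fun uc : U × C => ∑ b : B, if φ b = uc.2 then m (uc.1, b) else 0) =
      ∑ u : U, ∑ c : C, T u c *
        Real.logb 2 (T u c / ((∑ c' : C, T u c') * (∑ u' : U, T u' c))) := rfl
  have goal2 : mi2 m = ∑ u : U, ∑ b : B,
      m (u, b) * Real.logb 2 (m (u, b) / (mU u * mB b)) := rfl
  rw [goal1, goal2]
  exact Finset.sum_le_sum fun u _ => step u

lemma div_div_div_same (a b c : ℝ) (hc : c ≠ 0) : a / c / (b / c) = a / b := by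
  rcases eq_or_ne b 0 with h | h
  · simp [h]
  · field_simp

lemma mi2_scale {U H X : Type*} [Fintype U] [Fintype H] [Fintype X] [Nonempty H]
    (p : U × X → ℝ) :
    mi2 (fun uhx : U × (H × X) => p (uhx.1, uhx.2.2) / (Fintype.card H : ℝ)) = mi2 p := by
  set cH : ℝ := (Fintype.card H : ℝ) with hcH
  have hc0 : cH ≠ 0 := by
    rw [hcH]
    exact_mod_cast Fintype.card_ne_zero
  have row : ∀ u : U, (∑ b' : H × X, p (u, b'.2) / cH) = ∑ x : X, p (u, x) := by
    intro u
    rw [Fintype.sum_prod_type]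
    simp only [← Finset.sum_div]
    rw [Finset.sum_const, Finset.card_univ, nsmul_eq_mul, ← hcH]
    exact mul_div_cancel_left₀ _ hc0
  have goal1 : mi2 (fun uhx : U × (H × X) => p (uhx.1, uhx.2.2) / cH) =
      ∑ u : U, ∑ hx : H × X, (p (u, hx.2) / cH) *
        Real.logb 2 ((p (u, hx.2) / cH) /
          ((∑ b' : H × X, p (u, b'.2) / cH) * (∑ u' : U, p (u', hx.2) / cH))) := rfl
  have goal2 : mi2 p = ∑ u : U, ∑ x : X, p (u, x) *
      Real.logb 2 (p (u, x) / ((∑ x' : X, p (u, x')) * (∑ u' : U, p (u', x)))) := rfl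
  rw [goal1, goal2]
  refine Finset.sum_congr rfl fun u _ => ?_
  rw [Fintype.sum_prod_type]
  have inner : ∀ x : X, (p (u, x) / cH) *
      Real.logb 2 ((p (u, x) / cH) /
        ((∑ b' : H × X, p (u, b'.2) / cH) * (∑ u' : U, p (u', x) / cH))) =
      (p (u, x) * Real.logb 2 (p (u, x) /
        ((∑ x' : X, p (u, x')) * (∑ u' : U, p (u', x))))) / cH := by
    intro x
    rw [row u, ← Finset.sum_div, ← mul_div_assoc, div_div_div_same _ _ _ hc0,
      div_mul_eq_mul_div]
  simp only [inner]
  simp only [← Finset.sum_div]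
  rw [Finset.sum_const, Finset.card_univ, nsmul_eq_mul, ← hcH]
  exact mul_div_cancel_left₀ _ hc0

theorem stmt10 {U 𝒳 H : Type*} [Fintype U] [Fintype 𝒳] [Fintype H] [Nonempty H]
    (g : ℕ) (hg : 1 ≤ g) (hash : H → 𝒳 → Fin g) (ε : ℝ) (hε : 0 ≤ ε)
    (p : U × 𝒳 → ℝ) (hp : IsPmf p) :
    mi2 (fun uz : U × (H × Fin g) => ∑ x : 𝒳, p (uz.1, x) *
        ((1 / (Fintype.card H : ℝ)) *
          (if uz.2.2 = hash uz.2.1 x then Real.exp ε / ((g : ℝ) + Real.exp ε - 1)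
            else 1 / ((g : ℝ) + Real.exp ε - 1)))) ≤
      (Real.exp ε - 1) / ((g : ℝ) + Real.exp ε - 1) * mi2 p := by
  classical
  obtain ⟨hpnn, hpsum⟩ := hp
  set cH : ℝ := (Fintype.card H : ℝ) with hcH
  have hc0 : cH ≠ 0 := by rw [hcH]; exact_mod_cast Fintype.card_ne_zero
  have hcpos : 0 < cH := by
    rw [hcH]; exact_mod_cast Fintype.card_pos
  have hexp1 : (1:ℝ) ≤ Real.exp ε := by
    have := Real.exp_le_exp.mpr hε
    rwa [Real.exp_zero] at this
  set D : ℝ := (g : ℝ) + Real.exp ε - 1 with hD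
  have hDpos : 0 < D := by
    have hg1 : (1:ℝ) ≤ (g:ℝ) := by exact_mod_cast hg
    have : (0:ℝ) < Real.exp ε := Real.exp_pos ε
    rw [hD]; linarith
  set θ : ℝ := (Real.exp ε - 1) / D with hθdef
  have hθnn : 0 ≤ θ := div_nonneg (by linarith) hDpos.le
  set k : ℝ := 1 / (cH * D) with hk
  have hknn : 0 ≤ k := by positivity
  set pU : U → ℝ := fun u => ∑ x : 𝒳, p (u, x) with hpU
  have hpUnn : ∀ u, 0 ≤ pU u := fun u => Finset.sum_nonneg fun x _ => hpnn _
  have hpUsum : ∑ u : U, pU u = 1 := by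
    rw [hpU, ← Fintype.sum_prod_type]
    exact hpsum
  set R : U → H × Fin g → ℝ :=
    fun u hy => (∑ x : 𝒳, if hy.2 = hash hy.1 x then p (u, x) else 0) / cH with hR
  have hRnn : ∀ u hy, 0 ≤ R u hy := by
    intro u hy
    apply div_nonneg _ hcpos.le
    apply Finset.sum_nonneg
    intro x _
    split
    · exact hpnn _
    · exact le_rfl
  set RY : H × Fin g → ℝ := fun hy => ∑ u' : U, R u' hy with hRY
  have hRYnn : ∀ hy, 0 ≤ RY hy := fun hy => Finset.sum_nonneg fun u _ => hRnn u hy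
  have hRrow : ∀ u, (∑ hy : H × Fin g, R u hy) = pU u := by
    intro u
    rw [hR]
    simp only
    rw [Fintype.sum_prod_type]
    have inner : ∀ h : H, (∑ y : Fin g,
        (∑ x : 𝒳, if y = hash h x then p (u, x) else 0) / cH) = pU u / cH := by
      intro h
      simp only [← Finset.sum_div]
      rw [Finset.sum_comm]
      congr 1
      refine Finset.sum_congr rfl fun x _ => ?_
      simp
    simp only [inner]
    rw [Finset.sum_const, Finset.card_univ, nsmul_eq_mul, ← hcH, mul_div_assoc']
    exact mul_div_cancel_left₀ _ hc0
  -- the GLH output distribution is a mixture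
  have hfun : (fun uz : U × (H × Fin g) => ∑ x : 𝒳, p (uz.1, x) *
      ((1 / (Fintype.card H : ℝ)) *
        (if uz.2.2 = hash uz.2.1 x then Real.exp ε / ((g : ℝ) + Real.exp ε - 1)
          else 1 / ((g : ℝ) + Real.exp ε - 1)))) =
      fun uz : U × (H × Fin g) => θ * R uz.1 uz.2 + pU uz.1 * k := by
    funext uz
    obtain ⟨u, hy⟩ := uz
    simp only [hR, hpU, hk, hθdef, ← hcH, ← hD]
    rw [Finset.sum_div, Finset.mul_sum, Finset.sum_mul, ← Finset.sum_add_distrib]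
    refine Finset.sum_congr rfl fun x _ => ?_
    by_cases hcond : hy.2 = hash hy.1 x
    · rw [if_pos hcond, if_pos hcond]
      field_simp
      ring
    · rw [if_neg hcond, if_neg hcond]
      field_simp
      ring
  rw [hfun]
  -- marginals of the mixture
  have hQrow : ∀ u, (∑ hy : H × Fin g, (θ * R u hy + pU u * k)) = pU u := by
    intro u
    rw [Finset.sum_add_distrib, ← Finset.mul_sum, hRrow u, Finset.sum_const,
      Finset.card_univ, nsmul_eq_mul, Fintype.card_prod, Fintype.card_fin]
    push_cast
    rw [← hcH, hk, hθdef]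
    field_simp
    ring
  have hQcol : ∀ hy, (∑ u' : U, (θ * R u' hy + pU u' * k)) = θ * RY hy + k := by
    intro hy
    rw [Finset.sum_add_distrib, ← Finset.mul_sum, ← Finset.sum_mul, hpUsum, one_mul, hRY]
  have goalQ : mi2 (fun uz : U × (H × Fin g) => θ * R uz.1 uz.2 + pU uz.1 * k) =
      ∑ u : U, ∑ hy : H × Fin g, (θ * R u hy + pU u * k) *
        Real.logb 2 ((θ * R u hy + pU u * k) /
          ((∑ hy' : H × Fin g, (θ * R u hy' + pU u * k)) *
           (∑ u' : U, (θ * R u' hy + pU u' * k)))) := rfl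
  have goalR : mi2 (fun uhy : U × (H × Fin g) => R uhy.1 uhy.2) =
      ∑ u : U, ∑ hy : H × Fin g, R u hy *
        Real.logb 2 (R u hy / ((∑ hy' : H × Fin g, R u hy') * (∑ u' : U, R u' hy))) := rfl
  have stepA : mi2 (fun uz : U × (H × Fin g) => θ * R uz.1 uz.2 + pU uz.1 * k) ≤
      θ * mi2 (fun uhy : U × (H × Fin g) => R uhy.1 uhy.2) := by
    rw [goalQ, goalR, Finset.mul_sum]
    refine Finset.sum_le_sum fun u _ => ?_
    rw [Finset.mul_sum]
    refine Finset.sum_le_sum fun hy _ => ?_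
    rw [hQrow u, hQcol hy, hRrow u]
    have hb1a1 : θ * (pU u * RY hy) = 0 → θ * R u hy = 0 := by
      intro hb
      rcases mul_eq_zero.mp hb with h | h
      · rw [h, zero_mul]
      · rcases mul_eq_zero.mp h with h' | h'
        · have hx0 : ∀ x ∈ (Finset.univ : Finset 𝒳), p (u, x) = 0 :=
            (Finset.sum_eq_zero_iff_of_nonneg fun x _ => hpnn _).mp h'
          have : R u hy = 0 := by
            rw [hR]
            simp only
            rw [Finset.sum_eq_zero, zero_div]
            intro x hx
            rw [hx0 x hx, ite_self]
          rw [this, mul_zero]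
        · have hle : R u hy ≤ RY hy :=
            Finset.single_le_sum (fun u' _ => hRnn u' hy) (Finset.mem_univ u)
          have : R u hy = 0 := le_antisymm (h' ▸ hle) (hRnn u hy)
          rw [this, mul_zero]
    have hsplit : pU u * (θ * RY hy + k) = θ * (pU u * RY hy) + pU u * k := by ring
    rw [hsplit]
    calc (θ * R u hy + pU u * k) *
          Real.logb 2 ((θ * R u hy + pU u * k) / (θ * (pU u * RY hy) + pU u * k))
        ≤ (θ * R u hy) * Real.logb 2 ((θ * R u hy) / (θ * (pU u * RY hy))) +
          (pU u * k) * Real.logb 2 ((pU u * k) / (pU u * k)) :=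
          logb_two_term _ _ _ _ (mul_nonneg hθnn (hRnn u hy))
            (mul_nonneg (hpUnn u) hknn)
            (mul_nonneg hθnn (mul_nonneg (hpUnn u) (hRYnn hy)))
            (mul_nonneg (hpUnn u) hknn) hb1a1 (fun h => h)
      _ = θ * (R u hy * Real.logb 2 (R u hy / (pU u * RY hy))) := by
          rw [scaled_logb, self_logb, add_zero]
    -- reconcile with goalR's inner expression
  have stepB : mi2 (fun uhy : U × (H × Fin g) => R uhy.1 uhy.2) ≤
      mi2 (fun um : U × (H × 𝒳) => p (um.1, um.2.2) / cH) := by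
    have hRpush : (fun uhy : U × (H × Fin g) => R uhy.1 uhy.2) =
        fun uc : U × (H × Fin g) => ∑ b : H × 𝒳,
          if (b.1, hash b.1 b.2) = uc.2 then p (uc.1, b.2) / cH else 0 := by
      funext uc
      obtain ⟨u, h, y⟩ := uc
      rw [hR]
      simp only
      rw [Fintype.sum_prod_type]
      rw [Finset.sum_eq_single h]
      · rw [Finset.sum_div]
        refine Finset.sum_congr rfl fun x _ => ?_
        by_cases hc : y = hash h x
        · rw [if_pos hc, if_pos (by simp [hc])]
        · rw [if_neg hc, if_neg (by rintro h''; exact hc (congrArg Prod.snd h'').symm),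
            zero_div]
      · intro h' _ hne
        exact Finset.sum_eq_zero fun x _ =>
          if_neg fun h'' => hne (congrArg Prod.fst h'')
      · intro habs
        exact absurd (Finset.mem_univ h) habs
    rw [hRpush]
    exact mi2_push (fun um : U × (H × 𝒳) => p (um.1, um.2.2) / cH)
      (fun um => div_nonneg (hpnn _) hcpos.le) (fun b => (b.1, hash b.1 b.2))
  have stepC : mi2 (fun um : U × (H × 𝒳) => p (um.1, um.2.2) / cH) = mi2 p :=
    mi2_scale p
  calc mi2 (fun uz : U × (H × Fin g) => θ * R uz.1 uz.2 + pU uz.1 * k)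
      ≤ θ * mi2 (fun uhy : U × (H × Fin g) => R uhy.1 uhy.2) := stepA
    _ ≤ θ * mi2 p := by
        rw [← stepC]
        exact mul_le_mul_of_nonneg_left stepB hθnn
    _ = (Real.exp ε - 1) / ((g : ℝ) + Real.exp ε - 1) * mi2 p := by rw [hθdef, hD]
end

section
/- Composition of the randomized response: suppose a user U has t data items X⁽¹⁾,…,X⁽ᵗ⁾ (possibly correlated) each taking values in 𝒳 of size k, and each X⁽ⁱ⁾ is independently obfuscated by the ε-RR producing Y⁽ⁱ⁾ (the RR randomness is independent across i and of everything else given the inputs). Then I(U; Y⁽¹⁾,…,Y⁽ᵗ⁾) ≤ t · θ · min{log n, log |𝒳|}, where θ = (e^ε−1)/(k+e^ε−1) and n is the number of users. -/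
open Finset Real

theorem log_sum_ineq {ι : Type*} (s : Finset ι) (a b : ι → ℝ)
    (ha : ∀ i ∈ s, 0 ≤ a i) (hb : ∀ i ∈ s, 0 ≤ b i)
    (hab : ∀ i ∈ s, a i ≠ 0 → b i ≠ 0) :
    (∑ i ∈ s, a i) * Real.log ((∑ i ∈ s, a i) / (∑ i ∈ s, b i)) ≤
      ∑ i ∈ s, a i * Real.log (a i / b i) := by
  by_cases hA0 : (∑ i ∈ s, a i) = 0
  · rw [hA0]
    simp only [zero_mul]
    refine Finset.sum_nonneg fun i hi => ?_
    rw [(Finset.sum_eq_zero_iff_of_nonneg ha).mp hA0 i hi]; simp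
  have hApos : 0 < ∑ i ∈ s, a i := lt_of_le_of_ne (Finset.sum_nonneg ha) (Ne.symm hA0)
  have hBpos : 0 < ∑ i ∈ s, b i := by
    rcases lt_or_eq_of_le (Finset.sum_nonneg hb) with h | h
    · exact h
    · exfalso
      apply hA0
      refine Finset.sum_eq_zero fun i hi => ?_
      by_contra hne
      exact hab i hi hne ((Finset.sum_eq_zero_iff_of_nonneg hb).mp h.symm i hi)
  set A := ∑ i ∈ s, a i with hA
  set B := ∑ i ∈ s, b i with hB
  have key : ∀ i ∈ s, a i * Real.log (A / B) + (a i - A / B * b i) ≤ a i * Real.log (a i / b i) := by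
    intro i hi
    rcases eq_or_ne (a i) 0 with h0 | h0
    · have : 0 ≤ A / B * b i := mul_nonneg (div_pos hApos hBpos).le (hb i hi)
      simp [h0]
      linarith
    · have hai : 0 < a i := lt_of_le_of_ne (ha i hi) (Ne.symm h0)
      have hbi : 0 < b i := lt_of_le_of_ne (hb i hi) (Ne.symm (hab i hi h0))
      have h1 : Real.log ((b i * A) / (a i * B)) ≤ (b i * A) / (a i * B) - 1 :=
        Real.log_le_sub_one_of_pos (by positivity)
      have h2 : Real.log ((b i * A) / (a i * B)) =
          Real.log (A / B) - Real.log (a i / b i) := by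
        rw [Real.log_div (by positivity) (by positivity),
            Real.log_div hApos.ne' hBpos.ne', Real.log_div hai.ne' hbi.ne',
            Real.log_mul hbi.ne' hApos.ne', Real.log_mul hai.ne' hBpos.ne']
        ring
      rw [h2] at h1
      have h3 : a i * (Real.log (A / B) - Real.log (a i / b i)) ≤
          a i * ((b i * A) / (a i * B) - 1) :=
        mul_le_mul_of_nonneg_left h1 hai.le
      have h4 : a i * ((b i * A) / (a i * B)) = A / B * b i := by
        field_simp
      nlinarith [h3, h4]
  calc A * Real.log (A / B)
      = ∑ i ∈ s, (a i * Real.log (A / B) + (a i - A / B * b i)) := by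
        rw [Finset.sum_add_distrib, Finset.sum_sub_distrib, ← Finset.sum_mul, ← Finset.mul_sum,
          ← hA, ← hB]
        field_simp
        ring
    _ ≤ ∑ i ∈ s, a i * Real.log (a i / b i) := Finset.sum_le_sum key

section MIBasic
set_option linter.unusedSectionVars false
variable {A B : Type*} [Fintype A] [Fintype B]

noncomputable def miN {A B : Type*} [Fintype A] [Fintype B] (p : A × B → ℝ) : ℝ :=
  ∑ a : A, ∑ b : B, p (a, b) *
    Real.log (p (a, b) / ((∑ b' : B, p (a, b')) * (∑ a' : A, p (a', b))))


lemma mi2_eq_miN (p : A × B → ℝ) : mi2 p = (Real.log 2)⁻¹ * miN p := by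
  simp only [mi2, miN, Real.logb, Finset.mul_sum]
  refine Finset.sum_congr rfl fun a _ => Finset.sum_congr rfl fun b _ => by ring

lemma miN_swap (p : A × B → ℝ) :
    miN (fun x : B × A => p (x.2, x.1)) = miN p := by
  simp only [miN]
  rw [Finset.sum_comm]
  refine Finset.sum_congr rfl fun a _ => Finset.sum_congr rfl fun b _ => ?_
  rw [mul_comm (∑ b' : B, p (a, b')) (∑ a' : A, p (a', b))]

lemma miN_le_log_card_right (p : A × B → ℝ) (hp : IsPmf p) :
    miN p ≤ Real.log (Fintype.card B) := by
  have hpos := hp.1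
  have hsum : ∑ a : A, ∑ b : B, p (a, b) = 1 := by
    rw [← Fintype.sum_prod_type]; exact hp.2
  have hBne : Nonempty B := by
    by_contra h
    rw [not_nonempty_iff] at h
    simp [Finset.univ_eq_empty] at hsum
  have hcardB : (1 : ℝ) ≤ Fintype.card B := by
    exact_mod_cast Fintype.card_pos
  -- marginals
  set pB : B → ℝ := fun b => ∑ a : A, p (a, b) with hpB
  have hpBnn : ∀ b, 0 ≤ pB b := fun b => Finset.sum_nonneg fun a _ => hpos _
  have hpB1 : ∑ b : B, pB b = 1 := by rw [← hsum, Finset.sum_comm]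
  -- step 1 : pointwise bound
  have step1 : miN p ≤ ∑ a : A, ∑ b : B, p (a, b) * Real.log (1 / pB b) := by
    refine Finset.sum_le_sum fun a _ => Finset.sum_le_sum fun b _ => ?_
    rcases eq_or_ne (p (a, b)) 0 with h0 | h0
    · simp [h0]
    have hpab : 0 < p (a, b) := lt_of_le_of_ne (hpos _) (Ne.symm h0)
    have hpA : 0 < ∑ b' : B, p (a, b') :=
      lt_of_lt_of_le hpab (Finset.single_le_sum (fun b' _ => hpos _) (Finset.mem_univ b))
    have hpBb : 0 < pB b :=
      lt_of_lt_of_le hpab (Finset.single_le_sum (f := fun a' => p (a', b)) (fun a' _ => hpos _) (Finset.mem_univ a))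
    have hsplit : Real.log (p (a, b) / ((∑ b' : B, p (a, b')) * pB b)) =
        Real.log (p (a, b) / (∑ b' : B, p (a, b'))) + Real.log (1 / pB b) := by
      rw [Real.log_div hpab.ne' (by positivity), Real.log_div hpab.ne' hpA.ne',
        Real.log_div one_ne_zero hpBb.ne', Real.log_mul hpA.ne' hpBb.ne', Real.log_one]
      ring
    rw [hsplit, mul_add]
    have hle1 : p (a, b) / (∑ b' : B, p (a, b')) ≤ 1 := by
      rw [div_le_one hpA]
      exact Finset.single_le_sum (fun b' _ => hpos _) (Finset.mem_univ b)
    have : p (a, b) * Real.log (p (a, b) / (∑ b' : B, p (a, b'))) ≤ 0 :=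
      mul_nonpos_of_nonneg_of_nonpos hpab.le (Real.log_nonpos (by positivity) hle1)
    linarith
  -- step 2 : collapse to entropy of pB
  have step2 : ∑ a : A, ∑ b : B, p (a, b) * Real.log (1 / pB b)
      = ∑ b : B, pB b * Real.log (1 / pB b) := by
    rw [Finset.sum_comm]
    exact Finset.sum_congr rfl fun b _ => by rw [← Finset.sum_mul]
  -- step 3 : entropy at most log card
  have step3 : ∑ b : B, pB b * Real.log (1 / pB b) ≤ Real.log (Fintype.card B) := by
    have hls := log_sum_ineq Finset.univ pB (fun _ => ((Fintype.card B : ℝ))⁻¹)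
      (fun b _ => hpBnn b) (fun _ _ => by positivity)
      (fun b _ _ => by positivity)
    rw [hpB1] at hls
    have hBsum : ∑ _b : B, ((Fintype.card B : ℝ))⁻¹ = 1 := by
      rw [Finset.sum_const, Finset.card_univ, nsmul_eq_mul]
      field_simp
    rw [hBsum] at hls
    simp only [div_one, Real.log_one, one_mul] at hls
    -- hls : 0 ≤ ∑ b, pB b * log (pB b / (card B)⁻¹)
    have hterm : ∀ b : B, pB b * Real.log (1 / pB b)
        = pB b * Real.log (Fintype.card B) - pB b * Real.log (pB b / ((Fintype.card B : ℝ))⁻¹) := by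
      intro b
      rcases eq_or_ne (pB b) 0 with h0 | h0
      · simp [h0]
      have hb : 0 < pB b := lt_of_le_of_ne (hpBnn b) (Ne.symm h0)
      rw [Real.log_div one_ne_zero hb.ne', Real.log_div hb.ne' (by positivity), Real.log_inv,
        Real.log_one]
      ring
    calc ∑ b : B, pB b * Real.log (1 / pB b)
        = ∑ b : B, (pB b * Real.log (Fintype.card B)
            - pB b * Real.log (pB b / ((Fintype.card B : ℝ))⁻¹)) :=
          Finset.sum_congr rfl fun b _ => hterm b
      _ = Real.log (Fintype.card B)
            - ∑ b : B, pB b * Real.log (pB b / ((Fintype.card B : ℝ))⁻¹) := by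
          rw [Finset.sum_sub_distrib, ← Finset.sum_mul, hpB1, one_mul]
      _ ≤ Real.log (Fintype.card B) := by linarith
  calc miN p ≤ ∑ a : A, ∑ b : B, p (a, b) * Real.log (1 / pB b) := step1
    _ = ∑ b : B, pB b * Real.log (1 / pB b) := step2
    _ ≤ Real.log (Fintype.card B) := step3

lemma miN_le_log_card_left (p : A × B → ℝ) (hp : IsPmf p) :
    miN p ≤ Real.log (Fintype.card A) := by
  rw [← miN_swap p]
  refine miN_le_log_card_right _ ⟨fun x => hp.1 _, ?_⟩
  rw [Fintype.sum_prod_type, Finset.sum_comm, ← Fintype.sum_prod_type]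
  exact hp.2

lemma miN_mix {ι : Type*} (s : Finset ι) (w : ι → ℝ) (hw : ∀ i ∈ s, 0 ≤ w i)
    (hw1 : ∑ i ∈ s, w i = 1) (q : ι → A × B → ℝ) (hq0 : ∀ i ∈ s, ∀ x, 0 ≤ q i x)
    (f : A → ℝ) (hqf : ∀ i ∈ s, ∀ a, ∑ b : B, q i (a, b) = f a) :
    miN (fun x => ∑ i ∈ s, w i * q i x) ≤ ∑ i ∈ s, w i * miN (q i) := by
  have hfnn : ∀ a, 0 ≤ f a := by
    intro a
    have hs : s.Nonempty := Finset.nonempty_of_sum_ne_zero (by rw [hw1]; norm_num)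
    obtain ⟨i, hi⟩ := hs
    rw [← hqf i hi a]
    exact Finset.sum_nonneg fun b _ => hq0 i hi _
  have hPA : ∀ a : A, (∑ b' : B, ∑ i ∈ s, w i * q i (a, b')) = f a := by
    intro a
    rw [Finset.sum_comm]
    calc ∑ i ∈ s, ∑ b' : B, w i * q i (a, b')
        = ∑ i ∈ s, w i * f a := Finset.sum_congr rfl fun i hi => by
          rw [← Finset.mul_sum, hqf i hi]
      _ = f a := by rw [← Finset.sum_mul, hw1, one_mul]
  simp only [miN, hPA]
  have key : ∀ (a : A) (b : B),
      (∑ i ∈ s, w i * q i (a, b)) *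
        Real.log ((∑ i ∈ s, w i * q i (a, b)) / (f a * ∑ a' : A, ∑ i ∈ s, w i * q i (a', b)))
      ≤ ∑ i ∈ s, w i * (q i (a, b) *
          Real.log (q i (a, b) / (f a * ∑ a' : A, q i (a', b)))) := by
    intro a b
    have hmarg : (∑ a' : A, ∑ i ∈ s, w i * q i (a', b)) = ∑ i ∈ s, w i * ∑ a' : A, q i (a', b) := by
      rw [Finset.sum_comm]
      exact Finset.sum_congr rfl fun i _ => by rw [Finset.mul_sum]
    have hbsum : f a * (∑ a' : A, ∑ i ∈ s, w i * q i (a', b))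
        = ∑ i ∈ s, w i * (f a * ∑ a' : A, q i (a', b)) := by
      rw [hmarg, Finset.mul_sum]
      exact Finset.sum_congr rfl fun i _ => by ring
    rw [hbsum]
    have hls := log_sum_ineq s (fun i => w i * q i (a, b))
      (fun i => w i * (f a * ∑ a' : A, q i (a', b)))
      (fun i hi => mul_nonneg (hw i hi) (hq0 i hi _))
      (fun i hi => mul_nonneg (hw i hi)
        (mul_nonneg (hfnn a) (Finset.sum_nonneg fun a' _ => hq0 i hi _)))
      (fun i hi hne => ?_)
    · refine hls.trans (Finset.sum_le_sum fun i hi => ?_)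
      rcases eq_or_ne (w i) 0 with h0 | h0
      · simp [h0]
      rw [mul_div_mul_left _ _ h0]
      ring_nf
      exact le_refl _
    · -- a_i ≠ 0 → b_i ≠ 0
      have hwne : w i ≠ 0 := fun h => hne (by simp [h])
      have hqne : q i (a, b) ≠ 0 := fun h => hne (by simp [h])
      have hqpos : 0 < q i (a, b) := lt_of_le_of_ne (hq0 i hi _) (Ne.symm hqne)
      have hfa : 0 < f a := by
        rw [← hqf i hi a]
        exact lt_of_lt_of_le hqpos
          (Finset.single_le_sum (f := fun b' => q i (a, b')) (fun b' _ => hq0 i hi _)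
            (Finset.mem_univ b))
      have hr : 0 < ∑ a' : A, q i (a', b) :=
        lt_of_lt_of_le hqpos
          (Finset.single_le_sum (f := fun a' => q i (a', b)) (fun a' _ => hq0 i hi _)
            (Finset.mem_univ a))
      positivity
  calc ∑ a : A, ∑ b : B, (∑ i ∈ s, w i * q i (a, b)) *
        Real.log ((∑ i ∈ s, w i * q i (a, b)) / (f a * ∑ a' : A, ∑ i ∈ s, w i * q i (a', b)))
      ≤ ∑ a : A, ∑ b : B, ∑ i ∈ s, w i * (q i (a, b) *
          Real.log (q i (a, b) / (f a * ∑ a' : A, q i (a', b)))) :=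
        Finset.sum_le_sum fun a _ => Finset.sum_le_sum fun b _ => key a b
    _ = ∑ a : A, ∑ i ∈ s, ∑ b : B, w i * (q i (a, b) *
          Real.log (q i (a, b) / (f a * ∑ a' : A, q i (a', b)))) :=
        Finset.sum_congr rfl fun a _ => Finset.sum_comm
    _ = ∑ i ∈ s, ∑ a : A, ∑ b : B, w i * (q i (a, b) *
          Real.log (q i (a, b) / (f a * ∑ a' : A, q i (a', b)))) := Finset.sum_comm
    _ = ∑ i ∈ s, w i * miN (q i) := by
        refine Finset.sum_congr rfl fun i hi => ?_
        simp only [miN, hqf i hi, Finset.mul_sum]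

lemma miN_comp_equiv {B' : Type*} [Fintype B'] (e : B' ≃ B) (p : A × B → ℝ) :
    miN (fun x : A × B' => p (x.1, e x.2)) = miN p := by
  simp only [miN]
  refine Finset.sum_congr rfl fun a _ => ?_
  have h1 : (∑ b'' : B', p (a, e b'')) = ∑ b : B, p (a, b) :=
    Equiv.sum_comp e (fun b => p (a, b))
  simp only [h1]
  exact Fintype.sum_equiv e _ _ fun b' => rfl

lemma miN_prod_uniform {Z W : Type*} [Fintype Z] [Fintype W] [Nonempty W]
    (m : A × Z → ℝ) :
    miN (fun x : A × (Z × W) => ((Fintype.card W : ℝ))⁻¹ * m (x.1, x.2.1)) = miN m := by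
  have hW : (0 : ℝ) < Fintype.card W := by exact_mod_cast Fintype.card_pos
  set c : ℝ := ((Fintype.card W : ℝ))⁻¹ with hc
  have hc0 : c ≠ 0 := by positivity
  simp only [miN]
  refine Finset.sum_congr rfl fun a _ => ?_
  have hA : (∑ b' : Z × W, c * m (a, b'.1)) = ∑ z' : Z, m (a, z') := by
    rw [Fintype.sum_prod_type]
    refine Finset.sum_congr rfl fun z' _ => ?_
    show ∑ _y : W, c * m (a, z') = m (a, z')
    rw [Finset.sum_const, Finset.card_univ, nsmul_eq_mul, hc]
    field_simp
  rw [hA, Fintype.sum_prod_type]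
  refine Finset.sum_congr rfl fun z _ => ?_
  have hB : (∑ a' : A, c * m (a', z)) = c * ∑ a' : A, m (a', z) := by
    rw [Finset.mul_sum]
  have harg : c * m (a, z) / ((∑ z' : Z, m (a, z')) * (c * ∑ a' : A, m (a', z)))
      = m (a, z) / ((∑ z' : Z, m (a, z')) * (∑ a' : A, m (a', z))) := by
    rw [show (∑ z' : Z, m (a, z')) * (c * ∑ a' : A, m (a', z))
        = c * ((∑ z' : Z, m (a, z')) * (∑ a' : A, m (a', z))) by ring]
    exact mul_div_mul_left _ _ hc0
  show ∑ _y : W, c * m (a, z) * Real.log (c * m (a, z) /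
      ((∑ z' : Z, m (a, z')) * (∑ a' : A, c * m (a', z)))) = _
  simp only [hB, harg]
  rw [Finset.sum_const, Finset.card_univ, nsmul_eq_mul, hc]
  field_simp

end MIBasic

lemma powerset_norm {ι : Type*} [DecidableEq ι] (x y : ℝ) (s : Finset ι) :
    ∑ S ∈ s.powerset, x ^ S.card * y ^ (s.card - S.card) = (x + y) ^ s.card := by
  rw [← Finset.prod_const (b := x + y), Finset.prod_add]
  refine Finset.sum_congr rfl fun S hS => ?_
  rw [Finset.prod_const, Finset.prod_const,
    Finset.card_sdiff_of_subset (Finset.mem_powerset.mp hS)]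

lemma powerset_mean {ι : Type*} [DecidableEq ι] (x y : ℝ) (hxy : x + y = 1) (s : Finset ι) :
    ∑ S ∈ s.powerset, x ^ S.card * y ^ (s.card - S.card) * (S.card : ℝ)
      = (s.card : ℝ) * x := by
  induction s using Finset.induction_on with
  | empty => simp
  | @insert a s ha ih =>
    rw [Finset.sum_powerset_insert ha]
    have hcards : (insert a s).card = s.card + 1 := Finset.card_insert_of_notMem ha
    have h1 : ∑ S ∈ s.powerset, x ^ S.card * y ^ ((insert a s).card - S.card) * (S.card : ℝ)
        = y * ((s.card : ℝ) * x) := by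
      rw [← ih, Finset.mul_sum]
      refine Finset.sum_congr rfl fun S hS => ?_
      have hle : S.card ≤ s.card := Finset.card_le_card (Finset.mem_powerset.mp hS)
      rw [hcards, Nat.succ_sub hle, pow_succ]
      ring
    have h2 : ∑ S ∈ s.powerset, x ^ (insert a S).card *
          y ^ ((insert a s).card - (insert a S).card) * ((insert a S).card : ℝ)
        = x * ((s.card : ℝ) * x + 1) := by
      have hterm : ∀ S ∈ s.powerset, x ^ (insert a S).card *
            y ^ ((insert a s).card - (insert a S).card) * ((insert a S).card : ℝ)
          = x * (x ^ S.card * y ^ (s.card - S.card) * (S.card : ℝ))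
            + x * (x ^ S.card * y ^ (s.card - S.card)) := by
        intro S hS
        have haS : a ∉ S := fun h => ha (Finset.mem_powerset.mp hS h)
        have hcardS : (insert a S).card = S.card + 1 := Finset.card_insert_of_notMem haS
        rw [hcardS, hcards, Nat.succ_sub_succ, pow_succ]
        push_cast
        ring
      rw [Finset.sum_congr rfl hterm, Finset.sum_add_distrib, ← Finset.mul_sum, ← Finset.mul_sum,
        ih, powerset_norm x y s, hxy, one_pow]
      ring
    rw [h1, h2, hcards]
    push_cast
    linear_combination ((s.card : ℝ) * x) * hxy

section Aux
set_option linter.unusedSectionVars false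
variable {U 𝒳 : Type*} [Fintype U] [Fintype 𝒳] [DecidableEq 𝒳]

lemma sum_prod_ite_eq_one {ι : Type*} [Fintype ι] [DecidableEq ι] (g : ι → 𝒳) :
    ∑ z : ι → 𝒳, ∏ i : ι, (if z i = g i then (1:ℝ) else 0) = 1 := by
  calc ∑ z : ι → 𝒳, ∏ i : ι, (if z i = g i then (1:ℝ) else 0)
      = ∑ z ∈ Fintype.piFinset (fun _ : ι => (Finset.univ : Finset 𝒳)),
          ∏ i : ι, (if z i = g i then (1:ℝ) else 0) := by rw [Fintype.piFinset_univ]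
    _ = ∏ i : ι, ∑ c : 𝒳, (if c = g i then (1:ℝ) else 0) :=
        (Finset.prod_univ_sum (fun _ : ι => (Finset.univ : Finset 𝒳))
          (fun i c => if c = g i then (1:ℝ) else 0)).symm
    _ = 1 := by simp

lemma count_lemma {t : ℕ} (S : Finset (Fin t)) (xs : Fin t → 𝒳) :
    ∑ y : Fin t → 𝒳, ∏ i ∈ S, (if y i = xs i then (1:ℝ) else 0)
      = (Fintype.card 𝒳 : ℝ) ^ (t - S.card) := by
  have hprod : ∀ y : Fin t → 𝒳, ∏ i ∈ S, (if y i = xs i then (1:ℝ) else 0)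
      = ∏ i : Fin t, (if i ∈ S then (if y i = xs i then (1:ℝ) else 0) else 1) :=
    fun y => (Fintype.prod_ite_mem S _).symm
  simp only [hprod]
  calc ∑ y : Fin t → 𝒳, ∏ i : Fin t, (if i ∈ S then (if y i = xs i then (1:ℝ) else 0) else 1)
      = ∑ y ∈ Fintype.piFinset (fun _ : Fin t => (Finset.univ : Finset 𝒳)),
          ∏ i : Fin t, (if i ∈ S then (if y i = xs i then (1:ℝ) else 0) else 1) := by
        rw [Fintype.piFinset_univ]
    _ = ∏ i : Fin t, ∑ c : 𝒳, (if i ∈ S then (if c = xs i then (1:ℝ) else 0) else 1) :=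
        (Finset.prod_univ_sum (fun _ : Fin t => (Finset.univ : Finset 𝒳))
          (fun i c => if i ∈ S then (if c = xs i then (1:ℝ) else 0) else 1)).symm
    _ = ∏ i : Fin t, (if i ∈ S then (1:ℝ) else (Fintype.card 𝒳 : ℝ)) := by
        refine Finset.prod_congr rfl fun i _ => ?_
        by_cases h : i ∈ S <;> simp [h, Finset.card_univ]
    _ = (Fintype.card 𝒳 : ℝ) ^ (t - S.card) := by
        rw [← Finset.prod_sdiff (Finset.subset_univ S)]
        have h1 : ∏ i ∈ S, (if i ∈ S then (1:ℝ) else (Fintype.card 𝒳 : ℝ)) = 1 :=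
          Finset.prod_eq_one fun i hi => if_pos hi
        have h2 : ∏ i ∈ Finset.univ \ S, (if i ∈ S then (1:ℝ) else (Fintype.card 𝒳 : ℝ))
            = (Fintype.card 𝒳 : ℝ) ^ (t - S.card) := by
          rw [Finset.prod_congr rfl (fun i hi => if_neg (Finset.mem_sdiff.mp hi).2),
            Finset.prod_const, Finset.card_sdiff_of_subset (Finset.subset_univ S), Finset.card_univ,
            Fintype.card_fin]
        rw [h1, h2, mul_one]

variable (t : ℕ) (p : U × (Fin t → 𝒳) → ℝ)

noncomputable def qS (S : Finset (Fin t)) : U × (Fin t → 𝒳) → ℝ :=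
  fun uy => ((Fintype.card 𝒳 : ℝ)⁻¹) ^ (t - S.card) *
    ∑ xs : Fin t → 𝒳, p (uy.1, xs) * ∏ i ∈ S, (if uy.2 i = xs i then (1:ℝ) else 0)

noncomputable def mS (S : Finset (Fin t)) : U × ({i : Fin t // i ∈ S} → 𝒳) → ℝ :=
  fun x => ∑ xs : Fin t → 𝒳, p (x.1, xs) *
    ∏ i : {i : Fin t // i ∈ S}, (if x.2 i = xs i then (1:ℝ) else 0)

variable {t p}

lemma qS_nonneg (hp : ∀ x, 0 ≤ p x) (S : Finset (Fin t)) (x : U × (Fin t → 𝒳)) :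
    0 ≤ qS t p S x := by
  refine mul_nonneg (by positivity) (Finset.sum_nonneg fun xs _ => mul_nonneg (hp _) ?_)
  exact Finset.prod_nonneg fun i _ => by positivity

lemma qS_marg (hX : 0 < Fintype.card 𝒳) (S : Finset (Fin t)) (u : U) :
    ∑ y : Fin t → 𝒳, qS t p S (u, y) = ∑ x : Fin t → 𝒳, p (u, x) := by
  have hkpos : (0:ℝ) < (Fintype.card 𝒳 : ℝ) := by exact_mod_cast hX
  simp only [qS]
  rw [← Finset.mul_sum, Finset.sum_comm]
  have hinner : ∀ xs : Fin t → 𝒳,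
      ∑ y : Fin t → 𝒳, p (u, xs) * ∏ i ∈ S, (if y i = xs i then (1:ℝ) else 0)
      = p (u, xs) * (Fintype.card 𝒳 : ℝ) ^ (t - S.card) := by
    intro xs
    rw [← Finset.mul_sum, count_lemma]
  rw [Finset.sum_congr rfl fun xs _ => hinner xs, ← Finset.sum_mul]
  field_simp
  rw [one_div, inv_pow, mul_right_comm, inv_mul_cancel₀ (by positivity), one_mul]

lemma mS_pmf (hp : IsPmf p) (S : Finset (Fin t)) : IsPmf (mS t p S) := by
  constructor
  · intro x
    refine Finset.sum_nonneg fun xs _ => mul_nonneg (hp.1 _) ?_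
    exact Finset.prod_nonneg fun i _ => by positivity
  · have h1 : ∑ x : U × ({i : Fin t // i ∈ S} → 𝒳), mS t p S x
        = ∑ u : U, ∑ xs : Fin t → 𝒳, p (u, xs) := by
      rw [Fintype.sum_prod_type]
      refine Finset.sum_congr rfl fun u _ => ?_
      simp only [mS]
      rw [Finset.sum_comm]
      refine Finset.sum_congr rfl fun xs _ => ?_
      rw [← Finset.mul_sum, sum_prod_ite_eq_one (fun i : {i : Fin t // i ∈ S} => xs i), mul_one]
    rw [h1, ← Fintype.sum_prod_type]
    exact hp.2
end Aux

section Aux2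
set_option linter.unusedSectionVars false
variable {U 𝒳 : Type*} [Fintype U] [Fintype 𝒳] [DecidableEq 𝒳] {t : ℕ}
  {p : U × (Fin t → 𝒳) → ℝ}

lemma miN_qS_eq_mS (hX : Nonempty 𝒳) (S : Finset (Fin t)) :
    miN (qS t p S) = miN (mS t p S) := by
  classical
  haveI : Nonempty ({i : Fin t // ¬ i ∈ S} → 𝒳) := ⟨fun _ => Classical.arbitrary 𝒳⟩
  set e := Equiv.piEquivPiSubtypeProd (fun i : Fin t => i ∈ S) (fun _ => 𝒳) with he
  have hcardW : (Fintype.card ({i : Fin t // ¬ i ∈ S} → 𝒳) : ℝ)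
      = (Fintype.card 𝒳 : ℝ) ^ (t - S.card) := by
    rw [Fintype.card_fun, Fintype.card_subtype_compl, Fintype.card_fin, Fintype.card_coe]
    push_cast
    rfl
  have heq2 : (fun x : U × (({i : Fin t // i ∈ S} → 𝒳) × ({i : Fin t // ¬ i ∈ S} → 𝒳)) => qS t p S (x.1, e.symm x.2))
      = fun x => ((Fintype.card ({i : Fin t // ¬ i ∈ S} → 𝒳) : ℝ))⁻¹ * mS t p S (x.1, x.2.1) := by
    funext x
    obtain ⟨u, z, wv⟩ := x
    show ((Fintype.card 𝒳 : ℝ)⁻¹) ^ (t - S.card) *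
        (∑ xs : Fin t → 𝒳, p (u, xs) * ∏ i ∈ S, (if e.symm (z, wv) i = xs i then (1:ℝ) else 0))
      = ((Fintype.card ({i : Fin t // ¬ i ∈ S} → 𝒳) : ℝ))⁻¹ * mS t p S (u, z)
    have hc : ((Fintype.card 𝒳 : ℝ)⁻¹) ^ (t - S.card) = ((Fintype.card ({i : Fin t // ¬ i ∈ S} → 𝒳) : ℝ))⁻¹ := by
      rw [hcardW, inv_pow]
    have hprod : ∀ xs : Fin t → 𝒳,
        (∏ i ∈ S, (if e.symm (z, wv) i = xs i then (1:ℝ) else 0))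
        = ∏ i : {i : Fin t // i ∈ S}, (if z i = xs i then (1:ℝ) else 0) := by
      intro xs
      rw [← Finset.prod_coe_sort S (fun i => if e.symm (z, wv) i = xs i then (1:ℝ) else 0)]
      refine Finset.prod_congr rfl fun i _ => ?_
      congr 1
      rw [he, Equiv.piEquivPiSubtypeProd_symm_apply, dif_pos i.2]
    rw [hc, Finset.sum_congr rfl fun xs _ => by rw [hprod xs]]
    rfl
  calc miN (qS t p S) = miN (fun x : U × (({i : Fin t // i ∈ S} → 𝒳) × ({i : Fin t // ¬ i ∈ S} → 𝒳)) =>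
        qS t p S (x.1, e.symm x.2)) := (miN_comp_equiv e.symm (qS t p S)).symm
    _ = miN (fun x : U × (({i : Fin t // i ∈ S} → 𝒳) × ({i : Fin t // ¬ i ∈ S} → 𝒳)) =>
        ((Fintype.card ({i : Fin t // ¬ i ∈ S} → 𝒳) : ℝ))⁻¹ * mS t p S (x.1, x.2.1)) := by rw [heq2]
    _ = miN (mS t p S) := miN_prod_uniform (mS t p S)

lemma miN_qS_le (hp : IsPmf p) (hX : Nonempty 𝒳) (hX1 : 1 ≤ Fintype.card 𝒳)
    (hU1 : 1 ≤ Fintype.card U) (S : Finset (Fin t)) :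
    miN (qS t p S) ≤ (S.card : ℝ) *
      min (Real.log (Fintype.card U)) (Real.log (Fintype.card 𝒳)) := by
  rw [miN_qS_eq_mS hX S]
  have hm := mS_pmf hp S
  have hLn : (0:ℝ) ≤ Real.log (Fintype.card U) :=
    Real.log_nonneg (by exact_mod_cast hU1)
  have hLk : (0:ℝ) ≤ Real.log (Fintype.card 𝒳) :=
    Real.log_nonneg (by exact_mod_cast hX1)
  have hb1 : miN (mS t p S) ≤ Real.log (Fintype.card U) := miN_le_log_card_left _ hm
  have hb2 : miN (mS t p S) ≤ (S.card : ℝ) * Real.log (Fintype.card 𝒳) := by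
    have := miN_le_log_card_right _ hm
    rwa [Fintype.card_fun, Fintype.card_coe, Nat.cast_pow, Real.log_pow] at this
  rcases Nat.eq_zero_or_pos S.card with h0 | h1
  · rw [h0] at hb2 ⊢
    simpa using hb2
  rcases le_total (Real.log (Fintype.card U)) (Real.log (Fintype.card 𝒳)) with h | h
  · rw [min_eq_left h]
    calc miN (mS t p S) ≤ Real.log (Fintype.card U) := hb1
      _ ≤ (S.card : ℝ) * Real.log (Fintype.card U) :=
        le_mul_of_one_le_left hLn (by exact_mod_cast h1)
  · rw [min_eq_right h]
    exact hb2
end Aux2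

theorem stmt12 {U 𝒳 : Type*} [Fintype U] [Fintype 𝒳] [DecidableEq 𝒳]
    (hk : 2 ≤ Fintype.card 𝒳) (t : ℕ) (ε : ℝ) (hε : 0 ≤ ε)
    (p : U × (Fin t → 𝒳) → ℝ) (hp : IsPmf p) :
    mi2 (fun uy : U × (Fin t → 𝒳) => ∑ xs : Fin t → 𝒳, p (uy.1, xs) *
        ∏ i : Fin t,
          (if uy.2 i = xs i then Real.exp ε / ((Fintype.card 𝒳 : ℝ) + Real.exp ε - 1)
            else 1 / ((Fintype.card 𝒳 : ℝ) + Real.exp ε - 1))) ≤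
      (t : ℝ) * ((Real.exp ε - 1) / ((Fintype.card 𝒳 : ℝ) + Real.exp ε - 1)) *
        min (Real.logb 2 (Fintype.card U)) (Real.logb 2 (Fintype.card 𝒳)) := by
  classical
  have hXcard : 0 < Fintype.card 𝒳 := lt_of_lt_of_le (by norm_num) hk
  haveI hXne : Nonempty 𝒳 := Fintype.card_pos_iff.mp hXcard
  have hUne : Nonempty U := by
    by_contra h
    rw [not_nonempty_iff] at h
    haveI : IsEmpty (U × (Fin t → 𝒳)) := ⟨fun x => h.false x.1⟩
    have h1 := hp.2
    rw [Finset.univ_eq_empty, Finset.sum_empty] at h1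
    exact one_ne_zero h1.symm
  have hU1 : 1 ≤ Fintype.card U := Fintype.card_pos_iff.mpr hUne
  have hexp : (1:ℝ) ≤ Real.exp ε := by
    rw [← Real.exp_zero]; exact Real.exp_le_exp.mpr hε
  have hk2 : (2:ℝ) ≤ (Fintype.card 𝒳 : ℝ) := by exact_mod_cast hk
  set D : ℝ := (Fintype.card 𝒳 : ℝ) + Real.exp ε - 1 with hD
  have hDpos : 0 < D := by rw [hD]; linarith
  set θ : ℝ := (Real.exp ε - 1) / D with hθ
  have hθ0 : 0 ≤ θ := div_nonneg (by linarith) hDpos.le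
  have h1θ : 1 - θ = (Fintype.card 𝒳 : ℝ) / D := by
    rw [hθ, eq_div_iff hDpos.ne', sub_mul, div_mul_cancel₀ _ hDpos.ne', hD]; ring
  have h1θ0 : 0 ≤ 1 - θ := by
    rw [h1θ]; positivity
  have hkpos : (0:ℝ) < (Fintype.card 𝒳 : ℝ) := by linarith
  have hDinv : 1 / D = (1 - θ) * (Fintype.card 𝒳 : ℝ)⁻¹ := by
    rw [h1θ]; field_simp
  -- decomposition of the channel
  have hdecomp : (fun uy : U × (Fin t → 𝒳) => ∑ xs : Fin t → 𝒳, p (uy.1, xs) *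
        ∏ i : Fin t, (if uy.2 i = xs i then Real.exp ε / D else 1 / D))
      = fun uy => ∑ S ∈ (Finset.univ : Finset (Fin t)).powerset,
          (θ ^ S.card * (1 - θ) ^ (t - S.card)) * qS t p S uy := by
    funext uy
    have hchan : ∀ xs : Fin t → 𝒳,
        (∏ i : Fin t, (if uy.2 i = xs i then Real.exp ε / D else 1 / D))
        = ∑ S ∈ (Finset.univ : Finset (Fin t)).powerset,
            (θ ^ S.card * (1 / D) ^ (t - S.card)) *
              ∏ i ∈ S, (if uy.2 i = xs i then (1:ℝ) else 0) := by
      intro xs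
      have hfac : ∀ i : Fin t, (if uy.2 i = xs i then Real.exp ε / D else 1 / D)
          = θ * (if uy.2 i = xs i then (1:ℝ) else 0) + 1 / D := by
        intro i
        by_cases h : uy.2 i = xs i
        · rw [if_pos h, if_pos h, hθ]; field_simp; ring
        · rw [if_neg h, if_neg h]; ring
      rw [Finset.prod_congr rfl fun i _ => hfac i, Finset.prod_add]
      refine Finset.sum_congr rfl fun S hS => ?_
      rw [Finset.prod_mul_distrib, Finset.prod_const, Finset.prod_const,
        Finset.card_sdiff_of_subset (Finset.mem_powerset.mp hS), Finset.card_univ, Fintype.card_fin]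
      ring
    calc ∑ xs : Fin t → 𝒳, p (uy.1, xs) *
          ∏ i : Fin t, (if uy.2 i = xs i then Real.exp ε / D else 1 / D)
        = ∑ xs : Fin t → 𝒳, ∑ S ∈ (Finset.univ : Finset (Fin t)).powerset,
            p (uy.1, xs) * ((θ ^ S.card * (1 / D) ^ (t - S.card)) *
              ∏ i ∈ S, (if uy.2 i = xs i then (1:ℝ) else 0)) := by
          refine Finset.sum_congr rfl fun xs _ => ?_
          rw [hchan xs, Finset.mul_sum]
      _ = ∑ S ∈ (Finset.univ : Finset (Fin t)).powerset, ∑ xs : Fin t → 𝒳,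
            p (uy.1, xs) * ((θ ^ S.card * (1 / D) ^ (t - S.card)) *
              ∏ i ∈ S, (if uy.2 i = xs i then (1:ℝ) else 0)) := Finset.sum_comm
      _ = ∑ S ∈ (Finset.univ : Finset (Fin t)).powerset,
            (θ ^ S.card * (1 - θ) ^ (t - S.card)) * qS t p S uy := by
          refine Finset.sum_congr rfl fun S _ => ?_
          rw [hDinv, mul_pow]
          simp only [qS]
          conv_rhs => rw [Finset.mul_sum, Finset.mul_sum]
          exact Finset.sum_congr rfl fun xs _ => by ring
  rw [hdecomp, mi2_eq_miN]
  -- apply the mixture bound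
  have hw0 : ∀ S ∈ (Finset.univ : Finset (Fin t)).powerset,
      0 ≤ θ ^ S.card * (1 - θ) ^ (t - S.card) :=
    fun S _ => mul_nonneg (pow_nonneg hθ0 _) (pow_nonneg h1θ0 _)
  have hw1 : ∑ S ∈ (Finset.univ : Finset (Fin t)).powerset,
      θ ^ S.card * (1 - θ) ^ (t - S.card) = 1 := by
    have h := powerset_norm θ (1 - θ) (Finset.univ : Finset (Fin t))
    rw [Finset.card_univ, Fintype.card_fin] at h
    rw [h, add_sub_cancel, one_pow]
  have hmean : ∑ S ∈ (Finset.univ : Finset (Fin t)).powerset,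
      θ ^ S.card * (1 - θ) ^ (t - S.card) * (S.card : ℝ) = (t : ℝ) * θ := by
    have h := powerset_mean θ (1 - θ) (by ring) (Finset.univ : Finset (Fin t))
    rw [Finset.card_univ, Fintype.card_fin] at h
    exact h
  have hmix := miN_mix (Finset.univ : Finset (Fin t)).powerset
    (fun S => θ ^ S.card * (1 - θ) ^ (t - S.card)) hw0 hw1 (qS t p)
    (fun S _ x => qS_nonneg hp.1 S x) (fun u => ∑ x : Fin t → 𝒳, p (u, x))
    (fun S _ u => qS_marg hXcard S u)
  set M : ℝ := min (Real.log (Fintype.card U)) (Real.log (Fintype.card 𝒳)) with hM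
  have hfinal : miN (fun uy => ∑ S ∈ (Finset.univ : Finset (Fin t)).powerset,
      (θ ^ S.card * (1 - θ) ^ (t - S.card)) * qS t p S uy) ≤ (t : ℝ) * θ * M := by
    refine hmix.trans ?_
    calc ∑ S ∈ (Finset.univ : Finset (Fin t)).powerset,
          (θ ^ S.card * (1 - θ) ^ (t - S.card)) * miN (qS t p S)
        ≤ ∑ S ∈ (Finset.univ : Finset (Fin t)).powerset,
          (θ ^ S.card * (1 - θ) ^ (t - S.card)) * ((S.card : ℝ) * M) := by
          refine Finset.sum_le_sum fun S hS => ?_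
          exact mul_le_mul_of_nonneg_left
            (miN_qS_le hp hXne hXcard hU1 S) (hw0 S hS)
      _ = (∑ S ∈ (Finset.univ : Finset (Fin t)).powerset,
            θ ^ S.card * (1 - θ) ^ (t - S.card) * (S.card : ℝ)) * M := by
          rw [Finset.sum_mul]
          exact Finset.sum_congr rfl fun S _ => by ring
      _ = (t : ℝ) * θ * M := by rw [hmean]
  have hlog2 : (0:ℝ) < Real.log 2 := Real.log_pos one_lt_two
  have hRHS : (t : ℝ) * θ * min (Real.logb 2 (Fintype.card U)) (Real.logb 2 (Fintype.card 𝒳))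
      = (Real.log 2)⁻¹ * ((t : ℝ) * θ * M) := by
    simp only [Real.logb]
    rw [min_div_div_right hlog2.le, hM]
    ring
  rw [hRHS]
  exact mul_le_mul_of_nonneg_left hfinal (by positivity)
end

section
/- Expected ℓ₂ loss of the RR empirical estimator: fix inputs X₁,…,Xₙ ∈ 𝒳 with empirical distribution p, and let each Yᵢ be an independent ε-RR obfuscation of Xᵢ. For x ∈ 𝒳, let c(x) = #{i : Yᵢ = x} and p̂(x) = (c(x)/n − ν)/(μ − ν) with μ = e^ε/(k+e^ε−1), ν = 1/(k+e^ε−1), k = |𝒳|. Then E[(p(x) − p̂(x))²] = (k+e^ε−2)/(n(e^ε−1)²) + p(x)(k−2)/(n(e^ε−1)). -/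
open Finset Real

/-!
Let `q i` be the probability that the `i`-th report equals `x`. The centred indicators
`q i - [Yᵢ = x]` are independent with mean zero and variance `q i (1 - q i)`, and their sum is
`n (μ - ν) (p x - p̂ x)`. Hence the cross terms of the squared sum vanish in expectation and, with
`m = n p(x)` inputs equal to `x`, the loss is `(m μ(1-μ) + (n-m) ν(1-ν)) / (n (μ-ν))²`;
substituting `μ` and `ν` gives the formula.
-/

lemma sum_ite_eq_card_mul_add {ι R : Type*} [Fintype ι] [CommRing R] (P : ι → Prop)
    [DecidablePred P] (a b : R) :
    ∑ i, (if P i then a else b) = Fintype.card ι * b + #{i | P i} * (a - b) := by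
  have h : ∀ i, (if P i then a else b) = b + (if P i then 1 else 0) * (a - b) := by
    intro i; split_ifs <;> ring
  simp_rw [h, sum_add_distrib, ← sum_mul, sum_boole, sum_const, card_univ, nsmul_eq_mul]

section IndependentCoordinates

variable {ι α : Type*} [Fintype ι] [DecidableEq ι] [Fintype α] (Q : ι → α → ℝ)

lemma sum_pi_prod_mul_prod (g : ι → α → ℝ) :
    ∑ ys : ι → α, (∏ k, Q k (ys k)) * ∏ k, g k (ys k) = ∏ k, ∑ y, Q k y * g k y := by
  simp_rw [← prod_mul_distrib]
  exact (Fintype.prod_sum fun k y => Q k y * g k y).symm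

variable {Q}

lemma sum_pi_prod_mul_apply (hQ : ∀ k, ∑ y, Q k y = 1) (i : ι) (g : α → ℝ) :
    ∑ ys : ι → α, (∏ k, Q k (ys k)) * g (ys i) = ∑ y, Q i y * g y := by
  calc ∑ ys : ι → α, (∏ k, Q k (ys k)) * g (ys i)
      = ∑ ys : ι → α, (∏ k, Q k (ys k)) * ∏ k, (if k = i then g (ys k) else 1) := by
        simp only [Fintype.prod_ite_eq']
    _ = ∏ k, ∑ y, Q k y * (if k = i then g y else 1) :=
        sum_pi_prod_mul_prod Q fun k y => if k = i then g y else 1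
    _ = ∑ y, Q i y * g y := by
        rw [Fintype.prod_eq_single i fun k hk => by simp [hk, hQ]]
        simp

lemma sum_pi_prod_mul_apply_mul_apply (hQ : ∀ k, ∑ y, Q k y = 1) {i j : ι} (hij : i ≠ j)
    (g h : α → ℝ) :
    ∑ ys : ι → α, (∏ k, Q k (ys k)) * (g (ys i) * h (ys j))
      = (∑ y, Q i y * g y) * ∑ y, Q j y * h y := by
  calc ∑ ys : ι → α, (∏ k, Q k (ys k)) * (g (ys i) * h (ys j))
      = ∑ ys : ι → α, (∏ k, Q k (ys k)) *
          ∏ k, (if k = i then g (ys k) else 1) * (if k = j then h (ys k) else 1) := by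
        simp only [prod_mul_distrib, Fintype.prod_ite_eq']
    _ = ∏ k, ∑ y, Q k y * ((if k = i then g y else 1) * (if k = j then h y else 1)) :=
        sum_pi_prod_mul_prod Q fun k y => (if k = i then g y else 1) * (if k = j then h y else 1)
    _ = ∏ k, (if k = i then ∑ y, Q i y * g y else 1) *
          (if k = j then ∑ y, Q j y * h y else 1) := by
        refine prod_congr rfl fun k _ => ?_
        by_cases hki : k = i <;> by_cases hkj : k = j <;> simp_all
    _ = (∑ y, Q i y * g y) * ∑ y, Q j y * h y := by
        rw [prod_mul_distrib, Fintype.prod_ite_eq', Fintype.prod_ite_eq']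

lemma sum_pi_prod_mul_sq_sum_of_centered (hQ : ∀ k, ∑ y, Q k y = 1) (f : ι → α → ℝ)
    (hf : ∀ i, ∑ y, Q i y * f i y = 0) :
    ∑ ys : ι → α, (∏ k, Q k (ys k)) * (∑ i, f i (ys i)) ^ 2
      = ∑ i, ∑ y, Q i y * f i y ^ 2 := by
  calc ∑ ys : ι → α, (∏ k, Q k (ys k)) * (∑ i, f i (ys i)) ^ 2
      = ∑ i, ∑ j, ∑ ys : ι → α, (∏ k, Q k (ys k)) * (f i (ys i) * f j (ys j)) := by
        simp_rw [sq, sum_mul_sum, mul_sum]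
        rw [sum_comm]
        exact sum_congr rfl fun i _ => sum_comm
    _ = ∑ i, ∑ y, Q i y * f i y ^ 2 := by
        refine sum_congr rfl fun i _ => ?_
        rw [sum_eq_single i]
        · simp_rw [← sq]
          exact sum_pi_prod_mul_apply hQ i (fun y => f i y ^ 2)
        · intro j _ hji
          rw [sum_pi_prod_mul_apply_mul_apply hQ hji.symm, hf i, zero_mul]
        · simp

end IndependentCoordinates

section Indicator

variable {α : Type*} [Fintype α] [DecidableEq α] {P : α → ℝ}

lemma sum_mul_sub_indicator (hP : ∑ y, P y = 1) (x : α) :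
    ∑ y, P y * (P x - if y = x then 1 else 0) = 0 := by
  simp [mul_sub, sum_sub_distrib, ← sum_mul, hP]

lemma sum_mul_sub_indicator_sq (hP : ∑ y, P y = 1) (x : α) :
    ∑ y, P y * (P x - if y = x then 1 else 0) ^ 2 = P x * (1 - P x) := by
  have h : ∀ y, (P x - if y = x then 1 else 0) ^ 2
      = P x ^ 2 + (1 - 2 * P x) * (if y = x then 1 else 0) := by
    intro y; split_ifs <;> ring
  simp [h, mul_add, sum_add_distrib, ← sum_mul, hP]
  ring

end Indicator

lemma sum_prod_rr_mul_sq_sub_estimate {𝒳 : Type*} [Fintype 𝒳] [DecidableEq 𝒳] {n : ℕ}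
    (hn : (n : ℝ) ≠ 0) {μ ν : ℝ} (hrow : μ + (Fintype.card 𝒳 - 1) * ν = 1) (hμν : μ ≠ ν)
    (xs : Fin n → 𝒳) (x : 𝒳) :
    ∑ ys : Fin n → 𝒳, (∏ i, if ys i = xs i then μ else ν) *
        ((#{i | xs i = x} : ℝ) / n - ((#{i | ys i = x} : ℝ) / n - ν) / (μ - ν)) ^ 2
      = (#{i | xs i = x} * (μ * (1 - μ)) + (n - #{i | xs i = x}) * (ν * (1 - ν)))
          / (n * (μ - ν)) ^ 2 := by
  have hμν' : μ - ν ≠ 0 := sub_ne_zero.2 hμν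
  let Q : 𝒳 → 𝒳 → ℝ := fun a b => if b = a then μ else ν
  have hQ : ∀ a, ∑ y, Q a y = 1 := fun a => by
    rw [sum_ite_eq_card_mul_add, filter_eq' univ a, if_pos (mem_univ a), card_singleton, ← hrow]
    ring
  have hQx : ∀ i, Q (xs i) x = if xs i = x then μ else ν := fun i => by
    simp only [Q, @eq_comm _ x]
  let f : Fin n → 𝒳 → ℝ := fun i y => Q (xs i) x - if y = x then 1 else 0
  have hloss : ∀ ys : Fin n → 𝒳,
      (#{i | xs i = x} : ℝ) / n - ((#{i | ys i = x} : ℝ) / n - ν) / (μ - ν)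
        = (∑ i, f i (ys i)) / (n * (μ - ν)) := by
    intro ys
    simp only [f, hQx, sum_sub_distrib, sum_boole, sum_ite_eq_card_mul_add, Fintype.card_fin]
    field_simp
    ring
  have hbernoulli : ∀ i, Q (xs i) x * (1 - Q (xs i) x)
      = if xs i = x then μ * (1 - μ) else ν * (1 - ν) := fun i => by
    rw [hQx]; split_ifs <;> rfl
  calc _ = (∑ ys : Fin n → 𝒳, (∏ i, Q (xs i) (ys i)) * (∑ i, f i (ys i)) ^ 2)
        / (n * (μ - ν)) ^ 2 := by
        simp_rw [hloss, div_pow, mul_div_assoc', ← sum_div]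
        rfl
    _ = (∑ i, Q (xs i) x * (1 - Q (xs i) x)) / (n * (μ - ν)) ^ 2 := by
        rw [sum_pi_prod_mul_sq_sum_of_centered (fun i => hQ (xs i)) f
          fun i => sum_mul_sub_indicator (hQ (xs i)) x]
        simp only [f, sum_mul_sub_indicator_sq (hQ _)]
    _ = _ := by
        simp only [hbernoulli, sum_ite_eq_card_mul_add, Fintype.card_fin]
        ring

theorem stmt13_general {𝒳 : Type*} [Fintype 𝒳] [DecidableEq 𝒳]
    (n : ℕ) (hn : 1 ≤ n) (ε : ℝ) (hε : 0 < ε)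
    (xs : Fin n → 𝒳) (x : 𝒳) :
    let k : ℝ := (Fintype.card 𝒳 : ℝ)
    let μ : ℝ := Real.exp ε / (k + Real.exp ε - 1)
    let ν : ℝ := 1 / (k + Real.exp ε - 1)
    let Q : 𝒳 → 𝒳 → ℝ := fun a b => if b = a then μ else ν
    let p : 𝒳 → ℝ := fun a => ((Finset.univ.filter (fun i => xs i = a)).card : ℝ) / n
    let phat : (Fin n → 𝒳) → ℝ := fun ys =>
      (((Finset.univ.filter (fun i => ys i = x)).card : ℝ) / n - ν) / (μ - ν)
    (∑ ys : Fin n → 𝒳, (∏ i : Fin n, Q (xs i) (ys i)) * (p x - phat ys) ^ 2)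
      = (k + Real.exp ε - 2) / (n * (Real.exp ε - 1) ^ 2)
        + p x * (k - 2) / (n * (Real.exp ε - 1)) := by
  intro k μ ν Q p phat
  have hE : 1 < exp ε := one_lt_exp_iff.2 hε
  have hk : 1 ≤ k := Nat.one_le_cast.2 (Fintype.card_pos_iff.2 ⟨x⟩)
  have hD : k + exp ε - 1 ≠ 0 := by linarith
  have hn0 : (n : ℝ) ≠ 0 := by positivity
  have hrow : μ + (k - 1) * ν = 1 := by
    simp only [μ, ν]
    field_simp
    ring
  have hμν : μ ≠ ν := by
    simp only [μ, ν]
    exact fun h => hE.ne (div_left_inj' hD |>.1 h).symm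
  refine (sum_prod_rr_mul_sq_sub_estimate hn0 hrow hμν xs x).trans ?_
  have hE1 : exp ε - 1 ≠ 0 := by linarith
  simp only [μ, ν, p]
  field_simp
  ring

theorem stmt13 {𝒳 : Type*} [Fintype 𝒳] [DecidableEq 𝒳]
    (n : ℕ) (hn : 1 ≤ n) (ε : ℝ) (hε : 0 < ε) (hk : 2 ≤ Fintype.card 𝒳)
    (xs : Fin n → 𝒳) (x : 𝒳) :
    let k : ℝ := (Fintype.card 𝒳 : ℝ)
    let μ : ℝ := Real.exp ε / (k + Real.exp ε - 1)
    let ν : ℝ := 1 / (k + Real.exp ε - 1)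
    let Q : 𝒳 → 𝒳 → ℝ := fun a b => if b = a then μ else ν
    let p : 𝒳 → ℝ := fun a => ((Finset.univ.filter (fun i => xs i = a)).card : ℝ) / n
    let phat : (Fin n → 𝒳) → ℝ := fun ys =>
      (((Finset.univ.filter (fun i => ys i = x)).card : ℝ) / n - ν) / (μ - ν)
    (∑ ys : Fin n → 𝒳, (∏ i : Fin n, Q (xs i) (ys i)) * (p x - phat ys) ^ 2)
      = (k + Real.exp ε - 2) / (n * (Real.exp ε - 1) ^ 2)
        + p x * (k - 2) / (n * (Real.exp ε - 1)) :=
  stmt13_general n hn ε hε xs x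
end

section
/- Monotonicity and limit of the GLH ℓ₂ loss at fixed MI loss: parameterize the (g,ε)-GLH by θ = (e^ε−1)/(g+e^ε−1) ∈ (0,1) held fixed (so e^ε−1 = θ(g+e^ε−1), i.e., e^ε = 1 + θg/(1−θ)). Then the expected ℓ₂ loss equals (1 − p(x)θ)/(nθ²(g−1)) + p(x)(1−θ)/(nθ), which is strictly decreasing in g (for g ≥ 2) and converges to p(x)(1−θ)/(nθ) as g → ∞. -/
open Finset Real

theorem stmt16 (θ : ℝ) (hθ0 : 0 < θ) (hθ1 : θ < 1)
    (px : ℝ) (hpx0 : 0 ≤ px) (hpx1 : px ≤ 1) (n : ℕ) (hn : 1 ≤ n) :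
    let f : ℕ → ℝ := fun g =>
      (1 - px * θ) / ((n : ℝ) * θ ^ 2 * ((g : ℝ) - 1)) + px * (1 - θ) / ((n : ℝ) * θ)
    let E : ℕ → ℝ := fun g => 1 + θ * (g : ℝ) / (1 - θ)
    (∀ g : ℕ, 2 ≤ g →
      ((g : ℝ) + E g - 1) ^ 2 / ((n : ℝ) * (E g - 1) ^ 2 * ((g : ℝ) - 1))
        + px * ((g : ℝ) ^ 2 - 2 * (g : ℝ) - E g + 1)
            / ((n : ℝ) * (E g - 1) * ((g : ℝ) - 1)) = f g) ∧
    (∀ g g' : ℕ, 2 ≤ g → g < g' → f g' < f g) ∧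
    Filter.Tendsto f Filter.atTop (nhds (px * (1 - θ) / ((n : ℝ) * θ))) := by
  intro f E
  have hn0 : (0:ℝ) < (n:ℝ) := by exact_mod_cast hn
  have hθ' : (0:ℝ) < 1 - θ := by linarith
  have hC : 0 < 1 - px * θ := by nlinarith
  refine ⟨?_, ?_, ?_⟩
  · intro g hg
    have hg2 : (2:ℝ) ≤ (g:ℝ) := by exact_mod_cast hg
    have hg1 : (0:ℝ) < (g:ℝ) - 1 := by linarith
    have hg0 : (0:ℝ) < (g:ℝ) := by linarith
    simp only [f, E]
    field_simp
    ring
  · intro g g' hg hgg'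
    have hg2 : (2:ℝ) ≤ (g:ℝ) := by exact_mod_cast hg
    have hgg : (g:ℝ) < (g':ℝ) := by exact_mod_cast hgg'
    simp only [f]
    have hd : (0:ℝ) < (n : ℝ) * θ ^ 2 := by positivity
    have h1 : (0:ℝ) < (g:ℝ) - 1 := by linarith
    have h2 : (0:ℝ) < (g':ℝ) - 1 := by linarith
    have key : (1 - px * θ) / ((n : ℝ) * θ ^ 2 * ((g':ℝ) - 1))
        < (1 - px * θ) / ((n : ℝ) * θ ^ 2 * ((g:ℝ) - 1)) := by
      apply div_lt_div_of_pos_left hC (by positivity)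
      nlinarith
    linarith
  · have : Filter.Tendsto (fun g : ℕ => (1 - px * θ) / ((n : ℝ) * θ ^ 2 * ((g : ℝ) - 1)))
        Filter.atTop (nhds 0) := by
      apply Filter.Tendsto.div_atTop tendsto_const_nhds
      apply Filter.Tendsto.const_mul_atTop (by positivity)
      apply Filter.tendsto_atTop_add_const_right
      exact tendsto_natCast_atTop_atTop
    have h := this.add (tendsto_const_nhds (x := px * (1 - θ) / ((n : ℝ) * θ)))
    simpa using h
end
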